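/- arXiv:2310.17469 — 4 statements merged into one kernel-verified Lean document; each statement's English description precedes it below -/
import Mathlib

section
/- For every integer r ≥ 5, (2r-8)·((r-4)!)²·((r-1)!) raised to the power 1/(3r+1) is strictly less than ((r-2)!) raised to the power 1/(r+1). Equivalently, ((2r-8)·((r-4)!)²·((r-1)!))^(r+1) < ((r-2)!)^(3r+1). -/
lemma lemA (n : ℕ) : 4^n * (Nat.factorial n)^2 ≤ (n+1)^(2*n) := by
  have h1 : (Nat.factorial n)^2
      = (∏ i ∈ Finset.range n, (i+1)) * ∏ i ∈ Finset.range n, (n - i) := by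
    rw [← Finset.prod_range_add_one_eq_factorial, sq]
    congr 1
    rw [← Finset.prod_range_reflect]
    apply Finset.prod_congr rfl
    intro i hi
    simp only [Finset.mem_range] at hi
    omega
  have h2 : (4:ℕ)^n = ∏ _i ∈ Finset.range n, 4 := by simp
  calc 4^n * (Nat.factorial n)^2
      = ∏ i ∈ Finset.range n, 4 * ((i+1) * (n - i)) := by
        rw [h1, ← Finset.prod_mul_distrib, h2, ← Finset.prod_mul_distrib]
    _ ≤ ∏ _i ∈ Finset.range n, (n+1)^2 := by
        apply Finset.prod_le_prod'
        intro i hi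
        simp only [Finset.mem_range] at hi
        have hk : (i+1) + (n - i) = n + 1 := by omega
        have h3 := two_mul_le_add_sq (i+1) (n-i)
        nlinarith [hk]
    _ = (n+1)^(2*n) := by
        rw [Finset.prod_const, Finset.card_range, ← pow_mul, mul_comm]

lemma lemC (n A B F P : ℕ) (hF : 0 < F) (hP : 0 < P)
    (key : (A*B)^(n+5) * F^2 < P^(2*n+8)) :
    (A * F^2 * (B*(P*F)))^(n+5) < (P*F)^(3*n+13) := by
  calc (A * F^2 * (B*(P*F)))^(n+5)
      = ((A*B)^(n+5) * F^2) * (F^(3*n+13) * P^(n+5)) := by ring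
    _ < P^(2*n+8) * (F^(3*n+13) * P^(n+5)) :=
        Nat.mul_lt_mul_of_lt_of_le key le_rfl (by positivity)
    _ = (P*F)^(3*n+13) := by rw [mul_pow]; ring

lemma lemB (n : ℕ) (hn : 1 ≤ n) :
    (2*n * (Nat.factorial n)^2 * Nat.factorial (n+3))^(n+5)
      < (Nat.factorial (n+2))^(3*n+13) := by
  have hFpos : 0 < Nat.factorial n := Nat.factorial_pos n
  have hf2 : Nat.factorial (n+2) = ((n+1)*(n+2)) * Nat.factorial n := by
    show Nat.factorial (n+1+1) = _
    rw [Nat.factorial_succ, Nat.factorial_succ]; ring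
  have hf3 : Nat.factorial (n+3) = (n+3) * (((n+1)*(n+2)) * Nat.factorial n) := by
    show Nat.factorial (n+2+1) = _
    rw [Nat.factorial_succ, hf2]
  have h4 : (4:ℕ)^n = 2^(2*n) := by rw [pow_mul]; norm_num
  -- final scalar inequality
  have hE : 2^(n+5) * (n+2)^2 ≤ 4^n * (n+1)^8 := by
    have e1 : (n+2)^2 ≤ (n+1)^4 := by
      calc (n+2)^2 ≤ ((n+1)^2)^2 := Nat.pow_le_pow_left (by nlinarith) 2
        _ = (n+1)^4 := by ring
    have e3 : 2^(n+5) ≤ 4^n * (n+1)^4 := by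
      calc 2^(n+5) ≤ 2^(2*n+4) := Nat.pow_le_pow_right (by norm_num) (by omega)
        _ = 4^n * 2^4 := by rw [h4, ← pow_add]
        _ ≤ 4^n * (n+1)^4 :=
            Nat.mul_le_mul_left _ (Nat.pow_le_pow_left (by omega) 4)
    calc 2^(n+5) * (n+2)^2 ≤ 2^(n+5) * (n+1)^4 := Nat.mul_le_mul_left _ e1
      _ ≤ (4^n * (n+1)^4) * (n+1)^4 := Nat.mul_le_mul_right _ e3
      _ = 4^n * (n+1)^8 := by ring
  have hC : (2*n*(n+3))^(n+5) * (n+1)^(2*n)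
      < 4^n * ((n+1)^(2*n+8) * (n+2)^(2*n+8)) := by
    have s1 : 2*n*(n+3) < 2*(n+2)^2 := by nlinarith
    have s3 : (2*(n+2)^2)^(n+5) = 2^(n+5) * (n+2)^(2*n+10) := by
      rw [mul_pow, ← pow_mul, show 2*(n+5) = 2*n+10 from by ring]
    calc (2*n*(n+3))^(n+5) * (n+1)^(2*n)
        < (2*(n+2)^2)^(n+5) * (n+1)^(2*n) :=
          Nat.mul_lt_mul_of_lt_of_le (Nat.pow_lt_pow_left s1 (by omega)) le_rfl
            (by positivity)
      _ = (2^(n+5) * (n+2)^2) * ((n+2)^(2*n+8) * (n+1)^(2*n)) := by rw [s3]; ring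
      _ ≤ (4^n * (n+1)^8) * ((n+2)^(2*n+8) * (n+1)^(2*n)) :=
          Nat.mul_le_mul_right _ hE
      _ = 4^n * ((n+1)^(2*n+8) * (n+2)^(2*n+8)) := by ring
  have key : (2*n*(n+3))^(n+5) * (Nat.factorial n)^2 < ((n+1)*(n+2))^(2*n+8) := by
    have h5 : 4^n * ((2*n*(n+3))^(n+5) * (Nat.factorial n)^2)
        < 4^n * ((n+1)^(2*n+8) * (n+2)^(2*n+8)) := by
      calc 4^n * ((2*n*(n+3))^(n+5) * (Nat.factorial n)^2)
          = (2*n*(n+3))^(n+5) * (4^n * (Nat.factorial n)^2) := by ring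
        _ ≤ (2*n*(n+3))^(n+5) * (n+1)^(2*n) :=
            Nat.mul_le_mul_left _ (lemA n)
        _ < 4^n * ((n+1)^(2*n+8) * (n+2)^(2*n+8)) := hC
    have hmp : ((n+1)*(n+2))^(2*n+8) = (n+1)^(2*n+8) * (n+2)^(2*n+8) := mul_pow _ _ _
    rw [hmp]
    exact Nat.lt_of_mul_lt_mul_left h5
  rw [hf2, hf3]
  exact lemC n (2*n) (n+3) (Nat.factorial n) ((n+1)*(n+2)) hFpos (by positivity) key

theorem stmt0 (r : ℕ) (hr : 5 ≤ r) :
    ((2 * r - 8) * (Nat.factorial (r - 4))^2 * Nat.factorial (r - 1))^(r + 1)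
      < (Nat.factorial (r - 2))^(3 * r + 1) := by
  obtain ⟨n, hn, rfl⟩ : ∃ n, 1 ≤ n ∧ r = n + 4 := ⟨r - 4, by omega, by omega⟩
  have e1 : 2 * (n+4) - 8 = 2 * n := by omega
  have e2 : n + 4 - 4 = n := by omega
  have e3 : n + 4 - 1 = n + 3 := by omega
  have e4 : n + 4 - 2 = n + 2 := by omega
  have e5 : n + 4 + 1 = n + 5 := by omega
  have e6 : 3 * (n+4) + 1 = 3*n + 13 := by omega
  rw [e1, e2, e3, e4, e5, e6]
  exact lemB n hn
end

section
/- For every integer r ≥ 5, ((2r-8)(r-1))^(r+1) · ((r-3)!)² < ((r-3)²)^(r+1) · (r-2)^(2r). -/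
lemma aux1 (x n : ℕ) : x^n * (x + n) ≤ x * (x + 1)^n := by
  induction n with
  | zero => simp
  | succ n ih =>
    have h1 : x^(n+1) ≤ x * (x + 1)^n := by
      calc x^(n+1) = x * x^n := by ring
        _ ≤ x * (x+1)^n := by gcongr <;> omega
    calc x^(n+1) * (x + (n+1)) = x * (x^n * (x + n)) + x^(n+1) := by ring
      _ ≤ x * (x * (x+1)^n) + x * (x+1)^n := by
          exact Nat.add_le_add (Nat.mul_le_mul_left x ih) h1
      _ = x * (x+1)^(n+1) := by ring

lemma aux2 (n : ℕ) : 2 * (n+1)^(n+1) ≤ (n+2)^(n+1) := by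
  have h := aux1 (n+1) (n+1)
  have h2 : (n+1) * (2 * (n+1)^(n+1)) ≤ (n+1) * ((n+2)^(n+1)) := by
    calc (n+1) * (2 * (n+1)^(n+1)) = (n+1)^(n+1) * ((n+1) + (n+1)) := by ring
      _ ≤ (n+1) * ((n+1) + 1)^(n+1) := h
      _ = (n+1) * ((n+2)^(n+1)) := by ring_nf
  exact Nat.le_of_mul_le_mul_left h2 (by omega)

lemma aux3 (m : ℕ) : 2^m * Nat.factorial (m+1) ≤ (m+1)^(m+1) := by
  induction m with
  | zero => simp [Nat.factorial]
  | succ m ih =>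
    calc 2^(m+1) * Nat.factorial (m+2)
        = (2 * (m+2)) * (2^m * Nat.factorial (m+1)) := by
          rw [Nat.factorial_succ]; ring
      _ ≤ (2 * (m+2)) * (m+1)^(m+1) := Nat.mul_le_mul_left _ ih
      _ = (m+2) * (2 * (m+1)^(m+1)) := by ring
      _ ≤ (m+2) * (m+2)^(m+1) := Nat.mul_le_mul_left _ (aux2 m)
      _ = (m+2)^(m+2) := by ring

lemma auxC (s : ℕ) : 2^(s+6) * (s+3)^2 ≤ 2^(2*s+2) * (s+2)^8 := by
  induction s with
  | zero => norm_num
  | succ s ih =>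
    have h : (s+4)^2 ≤ 2 * (s+3)^2 := by
      simp only [pow_two]; nlinarith
    calc 2^(s+1+6) * (s+4)^2 = 2 * (2^(s+6) * (s+4)^2) := by ring
      _ ≤ 2 * (2^(s+6) * (2 * (s+3)^2)) := by
          exact Nat.mul_le_mul_left _ (Nat.mul_le_mul_left _ h)
      _ = 4 * (2^(s+6) * (s+3)^2) := by ring
      _ ≤ 4 * (2^(2*s+2) * (s+2)^8) := Nat.mul_le_mul_left _ ih
      _ = 2^(2*(s+1)+2) * (s+2)^8 := by ring
      _ ≤ 2^(2*(s+1)+2) * (s+3)^8 := by gcongr <;> omega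

theorem stmt1 (r : ℕ) (hr : 5 ≤ r) :
    ((2 * r - 8) * (r - 1))^(r + 1) * (Nat.factorial (r - 3))^2
      < ((r - 3)^2)^(r + 1) * (r - 2)^(2 * r) := by
  obtain ⟨s, rfl⟩ : ∃ s, r = s + 5 := ⟨r - 5, by omega⟩
  simp only [show 2*(s+5)-8 = 2*s+2 from by omega, show (s+5)-1 = s+4 from by omega,
    show (s+5)-3 = s+2 from by omega, show (s+5)-2 = s+3 from by omega,
    show (s+5)+1 = s+6 from by omega, show 2*(s+5) = 2*s+10 from by omega]
  apply Nat.lt_of_mul_lt_mul_left (a := 2^(2*s+2))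
  calc 2^(2*s+2) * (((2*s+2)*(s+4))^(s+6) * (Nat.factorial (s+2))^2)
      = ((2*s+2)*(s+4))^(s+6) * (2^(s+1) * Nat.factorial (s+2))^2 := by ring
    _ ≤ ((2*s+2)*(s+4))^(s+6) * ((s+2)^(s+2))^2 := by
        gcongr
        exact aux3 (s+1)
    _ = 2^(s+6) * ((s+1)*(s+4))^(s+6) * (s+2)^(2*s+4) := by
        rw [show (2*s+2)*(s+4) = 2*((s+1)*(s+4)) from by ring, mul_pow, ← pow_mul]
        ring
    _ < 2^(s+6) * ((s+3)^2)^(s+6) * (s+2)^(2*s+4) := by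
        have h : (s+1)*(s+4) < (s+3)^2 := by nlinarith
        gcongr
    _ = (2^(s+6) * (s+3)^2) * ((s+3)^(2*s+10) * (s+2)^(2*s+4)) := by
        rw [← pow_mul]; ring
    _ ≤ (2^(2*s+2) * (s+2)^8) * ((s+3)^(2*s+10) * (s+2)^(2*s+4)) := by
        exact Nat.mul_le_mul_right _ (auxC s)
    _ = 2^(2*s+2) * (((s+2)^2)^(s+6) * (s+3)^(2*s+10)) := by
        rw [← pow_mul]; ring
end

section
/- Let r ≥ 2 and let G be an r-regular graph with an edge e = xy contained in exactly c1 Hamiltonian cycles. Let H be a graph with two vertices u, v of degree r-1 and all other vertices of degree r, having exactly c2 Hamiltonian u–v paths. Form G' from the disjoint union of G and H by deleting e and adding edges xu and yv. Then G' is r-regular and has exactly c1·c2 Hamiltonian cycles. -/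
/-!
The two new edges `x u` and `y v` form a cut of `G'` of size two. A Hamiltonian cycle meets
both sides, so it crosses the cut and comes back, using both cut edges; removing them leaves a
Hamiltonian `u`–`v` path of `H` and a Hamiltonian `y`–`x` path of `G - xy`. Conversely every
such pair of paths closes up into a Hamiltonian cycle of `G'`, and since a path is determined by
its endpoints and its edge set, Hamiltonian cycles of `G'` (as edge sets) are in bijection with
these pairs. In the same way, the Hamiltonian cycles of `G` through `xy` are in bijection with
the Hamiltonian `y`–`x` paths of `G - xy`. Degrees are preserved because at `x` and at `y` the
deleted edge `xy` is replaced by a cut edge, and at `u` and `v` a cut edge is added.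
-/

open SimpleGraph Walk Sum

namespace Sym2

variable {α β : Type*}

lemma map_inr_ne_mk_inl (e : Sym2 β) (a : α) (z : α ⊕ β) : e.map inr ≠ s(inl a, z) :=
  fun h => by simpa [mem_map] using (h ▸ mem_mk_left (inl a) z : inl a ∈ e.map inr)

lemma map_inl_ne_mk_inr (e : Sym2 α) (z : α ⊕ β) (b : β) : e.map inl ≠ s(z, inr b) :=
  fun h => by simpa [mem_map] using (h ▸ mem_mk_right z (inr b) : inr b ∈ e.map inl)

lemma map_inl_ne_map_inr (e : Sym2 α) (e' : Sym2 β) :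
    e.map inl ≠ e'.map (inr : β → α ⊕ β) := by
  induction e using Sym2.ind
  exact (map_inr_ne_mk_inl e' _ _).symm

end Sym2

theorem Set.ncard_eq_ncard_preimage_inl_add {α β : Type*} [Finite α] [Finite β]
    (s : Set (α ⊕ β)) : s.ncard = (inl ⁻¹' s).ncard + (inr ⁻¹' s).ncard := by
  conv_lhs => rw [← Set.image_preimage_inl_union_image_preimage_inr s]
  rw [Set.ncard_union_eq Set.disjoint_image_inl_image_inr,
    Set.ncard_image_of_injective _ inl_injective, Set.ncard_image_of_injective _ inr_injective]

namespace SimpleGraph.Walk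

variable {V : Type*} {G : SimpleGraph V}

theorem IsPath.eq_of_edgeSet_eq : ∀ {u v : V} {p q : G.Walk u v}, p.IsPath → q.IsPath →
    p.edgeSet = q.edgeSet → p = q
  | _, _, .nil, .nil, _, _, _ => rfl
  | _, _, .nil, .cons _ _, _, _, h => absurd h.symm <| by
    simpa [edgeSet_cons] using (Set.insert_nonempty _ _).ne_empty
  | u, v, .cons (v := w) h p, q, hp, hq, hpq => by
    have hw : w = q.snd :=
      hq.eq_snd_of_mem_edges (show s(u, w) ∈ q.edgeSet by simp [← hpq, edgeSet_cons])
    cases q with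
    | nil => exact absurd hpq <| by simpa [edgeSet_cons] using (Set.insert_nonempty _ _).ne_empty
    | cons h' q =>
      rw [snd_cons] at hw
      subst hw
      rw [cons_isPath_iff] at hp hq
      have edgeSet_eq {r : G.Walk w v} (hr : u ∉ r.support) :
          r.edgeSet = (cons h r).edgeSet \ {s(u, w)} := by
        rw [edgeSet_cons, Set.insert_sdiff_self_of_notMem]
        exact fun he => hr (r.fst_mem_support_of_mem_edges he)
      rw [hp.1.eq_of_edgeSet_eq hq.1 (by rw [edgeSet_eq hp.2, edgeSet_eq hq.2, hpq])]

theorem IsPath.exists_eq_cons_of_mem_edges {u v w : V} {p : G.Walk u v} (hp : p.IsPath)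
    (he : s(u, w) ∈ p.edges) : ∃ (h : G.Adj u w) (q : G.Walk w v), p = cons h q := by
  have hw := hp.eq_snd_of_mem_edges he
  cases p with
  | nil => simp at he
  | cons h q =>
    rw [snd_cons] at hw
    subst hw
    exact ⟨h, q, rfl⟩

theorem IsCycle.exists_eq_cons_of_mem_edges {u w : V} {c : G.Walk u u} (hc : c.IsCycle)
    (he : s(u, w) ∈ c.edges) :
    ∃ (h : G.Adj u w) (q : G.Walk w u), c = cons h q ∨ c.reverse = cons h q := by
  cases c with
  | nil => exact absurd rfl hc.ne_nil
  | cons h p =>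
    rw [cons_isCycle_iff] at hc
    rw [edges_cons, List.mem_cons] at he
    rcases he with he | he
    · obtain rfl := Sym2.congr_right.1 he
      exact ⟨h, p, .inl rfl⟩
    · obtain ⟨h', q, hq⟩ := hc.1.reverse.exists_eq_cons_of_mem_edges (by simpa using he)
      refine ⟨h', q.concat h.symm, .inr ?_⟩
      rw [reverse_cons, hq, cons_append, concat_eq_append]

variable [DecidableEq V]

theorem isHamiltonian_iff_support_nodup {u v : V} {p : G.Walk u v} :
    p.IsHamiltonian ↔ p.support.Nodup ∧ ∀ a, a ∈ p.support :=
  ⟨fun hp => ⟨hp.isPath.support_nodup, hp.mem_support⟩,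
    fun h => (IsPath.mk' h.1).isHamiltonian_of_mem h.2⟩

theorem cons_isHamiltonianCycle_iff {u v : V} (h : G.Adj u v) (p : G.Walk v u) :
    (cons h p).IsHamiltonianCycle ↔ p.IsHamiltonian ∧ s(u, v) ∉ p.edges := by
  rw [isHamiltonianCycle_iff_isCycle_and_support_count_tail_eq_one, cons_isCycle_iff,
    support_cons, List.tail_cons]
  exact ⟨fun h => ⟨h.2, h.1.2⟩, fun h => ⟨⟨h.1.isPath, h.2⟩, h.1⟩⟩

protected theorem IsHamiltonianCycle.reverse {u : V} {c : G.Walk u u}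
    (hc : c.IsHamiltonianCycle) : c.reverse.IsHamiltonianCycle := by
  have := hc.finite
  cases nonempty_fintype V
  rw [isHamiltonianCycle_iff_isCycle_and_length_eq] at hc ⊢
  exact ⟨hc.1.reverse, by rw [length_reverse, hc.2]⟩

theorem IsHamiltonianCycle.exists_cons_of_mem_edges {w a b : V} {c : G.Walk w w}
    (hc : c.IsHamiltonianCycle) (he : s(a, b) ∈ c.edges) :
    ∃ p : G.Walk b a, p.IsHamiltonian ∧ s(a, b) ∉ p.edges ∧
      c.edgeSet = insert s(a, b) p.edgeSet := by
  have ha : a ∈ c.support := c.fst_mem_support_of_mem_edges he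
  have hrot : (c.rotate a ha).edgeSet = c.edgeSet :=
    Set.ext fun e => (rotate_edges c a ha).mem_iff
  obtain ⟨h, p, hp⟩ := (hc.rotate ha).isCycle.exists_eq_cons_of_mem_edges
    ((rotate_edges c a ha).mem_iff.2 he)
  have hcons : (cons h p).IsHamiltonianCycle ∧ (cons h p).edgeSet = c.edgeSet := by
    rcases hp with hp | hp
    · exact hp ▸ ⟨hc.rotate ha, hrot⟩
    · exact hp ▸ ⟨(hc.rotate ha).reverse, by rw [edgeSet_reverse, hrot]⟩
  rw [cons_isHamiltonianCycle_iff, edgeSet_cons] at hcons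
  exact ⟨p, hcons.1.1, hcons.1.2, hcons.2.symm⟩

end SimpleGraph.Walk

namespace SimpleGraph

section DeleteEdge

variable {V : Type*} {G : SimpleGraph V} {x y : V}

lemma Walk.notMem_edgeSet_of_deleteEdges {u v : V} (q : (G.deleteEdges {s(x, y)}).Walk u v) :
    s(x, y) ∉ q.edgeSet := fun h => by simpa using q.edges_subset_edgeSet h

theorem ncard_neighborSet_deleteEdges_add [Finite V] (hxy : G.Adj x y) (a : V) :
    ((G.deleteEdges {s(x, y)}).neighborSet a).ncard +
      {b | (a = x ∧ b = y) ∨ (a = y ∧ b = x)}.ncard = (G.neighborSet a).ncard := by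
  rw [← Set.ncard_union_eq]
  · congr 1
    ext b
    simp only [Set.mem_union, mem_neighborSet, deleteEdges_adj, Set.mem_singleton_iff,
      Set.mem_ofPred_eq, Sym2.eq_iff]
    constructor
    · rintro (⟨h, -⟩ | ⟨rfl, rfl⟩ | ⟨rfl, rfl⟩)
      exacts [h, hxy, hxy.symm]
    · tauto
  · rw [Set.disjoint_left]
    intro b hb
    simp only [mem_neighborSet, deleteEdges_adj, Set.mem_singleton_iff, Sym2.eq_iff] at hb
    simpa using hb.2

variable [DecidableEq V]

theorem setOf_isHamiltonianCycle_mem_edges_eq_range (hxy : G.Adj x y) :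
    {s | ∃ (a : V) (c : G.Walk a a), c.IsHamiltonianCycle ∧ s(x, y) ∈ c.edges ∧
      s = c.edgeSet} =
    Set.range fun q : {q : (G.deleteEdges {s(x, y)}).Walk y x // q.IsHamiltonian} =>
      insert s(x, y) q.1.edgeSet := by
  ext s
  constructor
  · rintro ⟨a, c, hc, hxyc, rfl⟩
    obtain ⟨t, ht, hxyt, hE⟩ := hc.exists_cons_of_mem_edges hxyc
    refine ⟨⟨t.toDeleteEdges {s(x, y)} fun e he h => hxyt (Set.mem_singleton_iff.1 h ▸ he),
      fun a => by rw [support_transfer]; exact ht a⟩, ?_⟩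
    exact (congrArg (insert s(x, y)) (edgeSet_transfer _ _)).trans hE.symm
  · rintro ⟨⟨q, hq⟩, rfl⟩
    refine ⟨x, cons hxy (q.mapLe (G.deleteEdges_le _)), ?_, by simp,
      by rw [edgeSet_cons, edgeSet_mapLe_eq_edgeSet]⟩
    rw [cons_isHamiltonianCycle_iff, edges_mapLe_eq_edges]
    exact ⟨fun a => by rw [support_mapLe_eq_support]; exact hq a,
      q.notMem_edgeSet_of_deleteEdges⟩

theorem ncard_setOf_isHamiltonianCycle_mem_edges (hxy : G.Adj x y) :
    {s | ∃ (a : V) (c : G.Walk a a), c.IsHamiltonianCycle ∧ s(x, y) ∈ c.edges ∧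
      s = c.edgeSet}.ncard =
    Nat.card {q : (G.deleteEdges {s(x, y)}).Walk y x // q.IsHamiltonian} := by
  rw [setOf_isHamiltonianCycle_mem_edges_eq_range hxy, Set.ncard_range_of_injective]
  rintro ⟨q, hq⟩ ⟨q', hq'⟩ h
  have hsdiff (r : (G.deleteEdges {s(x, y)}).Walk y x) :
      r.edgeSet = insert s(x, y) r.edgeSet \ {s(x, y)} :=
    (Set.insert_sdiff_self_of_notMem r.notMem_edgeSet_of_deleteEdges).symm
  refine Subtype.ext (hq.isPath.eq_of_edgeSet_eq hq'.isPath ?_)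
  rw [hsdiff q, hsdiff q']
  exact congrArg (· \ {s(x, y)}) h

end DeleteEdge

variable {α β : Type*}

structure IsJoinedBy (G' : SimpleGraph (α ⊕ β)) (L : SimpleGraph α) (H : SimpleGraph β)
    (x : α) (u : β) (y : α) (v : β) : Prop where
  inl_adj_inl : ∀ a b, G'.Adj (inl a) (inl b) ↔ L.Adj a b
  inr_adj_inr : ∀ a b, G'.Adj (inr a) (inr b) ↔ H.Adj a b
  inl_adj_inr : ∀ a b, G'.Adj (inl a) (inr b) ↔ (a = x ∧ b = u) ∨ (a = y ∧ b = v)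

namespace IsJoinedBy

variable {G' : SimpleGraph (α ⊕ β)} {L : SimpleGraph α} {H : SimpleGraph β}
  {x y : α} {u v : β} (hG : G'.IsJoinedBy L H x u y v)
include hG

-- `abbrev`, so that `⇑hG.inlHom` unfolds to `inl` and the walk lemmas below rewrite cleanly.
abbrev inlHom : L →g G' := ⟨inl, (hG.inl_adj_inl _ _).2⟩

abbrev inrHom : H →g G' := ⟨inr, (hG.inr_adj_inr _ _).2⟩

lemma adj_xu : G'.Adj (inl x) (inr u) := (hG.inl_adj_inr x u).2 (.inl ⟨rfl, rfl⟩)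

lemma adj_vy : G'.Adj (inr v) (inl y) := ((hG.inl_adj_inr y v).2 (.inr ⟨rfl, rfl⟩)).symm

lemma eq_or_eq_of_adj {a : α} {b : β} (h : G'.Adj (inl a) (inr b)) :
    s(inl a, inr b) = s(inl x, inr u) ∨ s(inl a, inr b) = s(inl y, inr v) := by
  rcases (hG.inl_adj_inr a b).1 h with ⟨rfl, rfl⟩ | ⟨rfl, rfl⟩ <;> simp

def path {b : β} {a : α} (p : H.Walk b v) (q : L.Walk y a) : G'.Walk (inr b) (inl a) :=
  (p.map hG.inrHom).append (cons hG.adj_vy (q.map hG.inlHom))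

def cycle (p : H.Walk u v) (q : L.Walk y x) : G'.Walk (inl x) (inl x) :=
  cons hG.adj_xu (hG.path p q)

lemma support_path {b : β} {a : α} (p : H.Walk b v) (q : L.Walk y a) :
    (hG.path p q).support = p.support.map inr ++ q.support.map inl := by
  rw [path, support_append, support_cons, List.tail_cons, Walk.support_map, Walk.support_map]
  rfl

lemma edges_path {b : β} {a : α} (p : H.Walk b v) (q : L.Walk y a) : (hG.path p q).edges =
    p.edges.map (Sym2.map inr) ++ s(inl y, inr v) :: q.edges.map (Sym2.map inl) := by
  rw [path, edges_append, edges_cons, Walk.edges_map, Walk.edges_map, Sym2.eq_swap]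
  rfl

lemma preimage_map_inr_edgeSet_cycle (p : H.Walk u v) (q : L.Walk y x) :
    Sym2.map inr ⁻¹' (hG.cycle p q).edgeSet = p.edgeSet := by
  ext e
  simp [cycle, edges_path, (Sym2.map.injective inr_injective).eq_iff, Sym2.map_inr_ne_mk_inl,
    Sym2.map_inl_ne_map_inr]

lemma preimage_map_inl_edgeSet_cycle (p : H.Walk u v) (q : L.Walk y x) :
    Sym2.map inl ⁻¹' (hG.cycle p q).edgeSet = q.edgeSet := by
  ext e
  simp [cycle, edges_path, (Sym2.map.injective inl_injective).eq_iff, Sym2.map_inl_ne_mk_inr,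
    (Sym2.map_inl_ne_map_inr _ _).symm]

lemma eq_and_eq_of_edgeSet_cycle_eq {p p' : H.Walk u v} {q q' : L.Walk y x} (hp : p.IsPath)
    (hp' : p'.IsPath) (hq : q.IsPath) (hq' : q'.IsPath)
    (h : (hG.cycle p q).edgeSet = (hG.cycle p' q').edgeSet) : p = p' ∧ q = q' :=
  ⟨hp.eq_of_edgeSet_eq hp' <| by
      rw [← hG.preimage_map_inr_edgeSet_cycle, h, hG.preimage_map_inr_edgeSet_cycle],
    hq.eq_of_edgeSet_eq hq' <| by
      rw [← hG.preimage_map_inl_edgeSet_cycle, h, hG.preimage_map_inl_edgeSet_cycle]⟩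

lemma exists_eq_map_inlHom : ∀ {a a' : α} (w : G'.Walk (inl a) (inl a')),
    s(inl x, inr u) ∉ w.edges → s(inl y, inr v) ∉ w.edges →
      ∃ q : L.Walk a a', w = q.map hG.inlHom
  | _, _, .nil, _, _ => ⟨nil, rfl⟩
  | _, _, .cons (v := .inr _) h _, hxu, hyv => by
    rcases hG.eq_or_eq_of_adj h with he | he <;> simp_all
  | _, _, .cons (v := .inl _) h w, hxu, hyv => by
    simp only [edges_cons, List.mem_cons, not_or] at hxu hyv
    obtain ⟨q, rfl⟩ := exists_eq_map_inlHom w hxu.2 hyv.2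
    exact ⟨cons ((hG.inl_adj_inl _ _).1 h) q, rfl⟩
termination_by _ _ w => w.length

lemma exists_eq_path : ∀ {b : β} {a : α} (w : G'.Walk (inr b) (inl a)), w.IsTrail →
    s(inl x, inr u) ∉ w.edges → ∃ (p : H.Walk b v) (q : L.Walk y a), w = hG.path p q
  | _, _, .cons (v := .inl _) h w, hw, hxu => by
    rw [isTrail_cons] at hw
    rcases (hG.inl_adj_inr _ _).1 h.symm with ⟨rfl, rfl⟩ | ⟨rfl, rfl⟩
    · simp [Sym2.eq_swap] at hxu
    · obtain ⟨q, rfl⟩ := hG.exists_eq_map_inlHom w (fun he => hxu (by simp [he]))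
        (by rw [Sym2.eq_swap]; exact hw.2)
      exact ⟨nil, q, rfl⟩
  | _, _, .cons (v := .inr _) h w, hw, hxu => by
    obtain ⟨p, q, rfl⟩ := exists_eq_path w hw.of_cons (fun he => hxu (by simp [he]))
    exact ⟨cons ((hG.inr_adj_inr _ _).1 h) p, q, rfl⟩
termination_by _ _ w => w.length

lemma mem_edges_of_isLeft_ne {s t : α ⊕ β} (w : G'.Walk s t) (hst : s.isLeft ≠ t.isLeft) :
    s(inl x, inr u) ∈ w.edges ∨ s(inl y, inr v) ∈ w.edges := by
  induction w with
  | nil => exact absurd rfl hst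
  | @cons s c t h w ih =>
    by_cases hsc : s.isLeft = c.isLeft
    · rcases ih (hsc ▸ hst) with he | he <;> simp [he]
    · have hcross : s(s, c) = s(inl x, inr u) ∨ s(s, c) = s(inl y, inr v) := by
        rcases s with a | b <;> rcases c with a' | b' <;>
          simp only [isLeft_inl, isLeft_inr, not_true_eq_false] at hsc
        · exact hG.eq_or_eq_of_adj h
        · rw [Sym2.eq_swap]; exact hG.eq_or_eq_of_adj h.symm
      rcases hcross with he | he <;> simp [← he]

/-- A closed trail through both sides crosses over and back along distinct edges, and only two
edges cross. -/
lemma mem_edges_of_isTrail {a : α} {b : β} {d : G'.Walk (inl a) (inl a)} (hd : d.IsTrail)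
    (hb : inr b ∈ d.support) : s(inl x, inr u) ∈ d.edges := by
  classical
  rw [← take_spec d hb, edges_append, List.mem_append]
  rcases hG.mem_edges_of_isLeft_ne (d.takeUntil _ hb) (by simp) with h | h
  · exact .inl h
  · rcases hG.mem_edges_of_isLeft_ne (d.dropUntil _ hb) (by simp) with h' | h'
    · exact .inr h'
    · exact absurd h' (hd.disjoint_edges_takeUntil_dropUntil hb h)

lemma ncard_neighborSet_inl [Finite α] [Finite β] (a : α) :
    (G'.neighborSet (inl a)).ncard =
      (L.neighborSet a).ncard + {b | (a = x ∧ b = u) ∨ (a = y ∧ b = v)}.ncard := by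
  rw [Set.ncard_eq_ncard_preimage_inl_add]
  congr 2 <;> ext <;> simp [hG.inl_adj_inl, hG.inl_adj_inr]

lemma ncard_neighborSet_inr [Finite α] [Finite β] (b : β) :
    (G'.neighborSet (inr b)).ncard =
      {a | (a = x ∧ b = u) ∨ (a = y ∧ b = v)}.ncard + (H.neighborSet b).ncard := by
  rw [Set.ncard_eq_ncard_preimage_inl_add]
  congr 2 <;> ext <;> simp [G'.adj_comm (inr b), H.adj_comm b, hG.inr_adj_inr, hG.inl_adj_inr]

variable [DecidableEq α] [DecidableEq β]

lemma mem_edges_of_isHamiltonianCycle {z : α ⊕ β} {c : G'.Walk z z}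
    (hc : c.IsHamiltonianCycle) : s(inl x, inr u) ∈ c.edges := by
  have hx := hc.mem_support (inl x)
  rw [← (rotate_edges c _ hx).mem_iff]
  exact hG.mem_edges_of_isTrail (hc.rotate hx).isTrail ((hc.rotate hx).mem_support (inr u))

lemma isHamiltonianCycle_cycle_iff (huv : u ≠ v) {p : H.Walk u v} {q : L.Walk y x} :
    (hG.cycle p q).IsHamiltonianCycle ↔ p.IsHamiltonian ∧ q.IsHamiltonian := by
  have hxu : s(inl x, inr u) ∉ (hG.path p q).edges := by
    simp [edges_path, Sym2.map_inr_ne_mk_inl, Sym2.map_inl_ne_mk_inr, huv]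
  rw [cycle, cons_isHamiltonianCycle_iff, isHamiltonian_iff_support_nodup,
    isHamiltonian_iff_support_nodup, isHamiltonian_iff_support_nodup, support_path]
  simp [hxu, List.nodup_append, List.nodup_map_iff inl_injective,
    List.nodup_map_iff inr_injective, Sum.forall]
  tauto

lemma exists_edgeSet_cycle_eq (huv : u ≠ v) {z : α ⊕ β} {c : G'.Walk z z}
    (hc : c.IsHamiltonianCycle) : ∃ (p : H.Walk u v) (q : L.Walk y x),
      p.IsHamiltonian ∧ q.IsHamiltonian ∧ (hG.cycle p q).edgeSet = c.edgeSet := by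
  obtain ⟨t, ht, hxu, hE⟩ := hc.exists_cons_of_mem_edges (hG.mem_edges_of_isHamiltonianCycle hc)
  obtain ⟨p, q, rfl⟩ := hG.exists_eq_path t ht.isPath.isTrail hxu
  have hpq : (hG.cycle p q).IsHamiltonianCycle := (cons_isHamiltonianCycle_iff _ _).2 ⟨ht, hxu⟩
  rw [hG.isHamiltonianCycle_cycle_iff huv] at hpq
  exact ⟨p, q, hpq.1, hpq.2, by rw [hE, cycle, edgeSet_cons]⟩

theorem setOf_isHamiltonianCycle_eq_range (huv : u ≠ v) :
    {s | ∃ (a : α ⊕ β) (c : G'.Walk a a), c.IsHamiltonianCycle ∧ s = c.edgeSet} =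
    Set.range fun pq : {p : H.Walk u v // p.IsHamiltonian} × {q : L.Walk y x // q.IsHamiltonian} =>
      (hG.cycle pq.1.1 pq.2.1).edgeSet := by
  ext s
  constructor
  · rintro ⟨a, c, hc, rfl⟩
    obtain ⟨p, q, hp, hq, hE⟩ := hG.exists_edgeSet_cycle_eq huv hc
    exact ⟨(⟨p, hp⟩, ⟨q, hq⟩), hE⟩
  · rintro ⟨⟨⟨p, hp⟩, ⟨q, hq⟩⟩, rfl⟩
    exact ⟨inl x, hG.cycle p q, (hG.isHamiltonianCycle_cycle_iff huv).2 ⟨hp, hq⟩, rfl⟩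

theorem ncard_setOf_isHamiltonianCycle (huv : u ≠ v) :
    {s | ∃ (a : α ⊕ β) (c : G'.Walk a a), c.IsHamiltonianCycle ∧ s = c.edgeSet}.ncard =
      Nat.card ({p : H.Walk u v // p.IsHamiltonian} × {q : L.Walk y x // q.IsHamiltonian}) := by
  rw [hG.setOf_isHamiltonianCycle_eq_range huv, Set.ncard_range_of_injective]
  rintro ⟨⟨p, hp⟩, ⟨q, hq⟩⟩ ⟨⟨p', hp'⟩, ⟨q', hq'⟩⟩ h
  obtain ⟨rfl, rfl⟩ :=
    hG.eq_and_eq_of_edgeSet_cycle_eq hp.isPath hp'.isPath hq.isPath hq'.isPath h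
  rfl

end IsJoinedBy

theorem IsJoinedBy.ncard_neighborSet_eq_of_deleteEdges [Finite α] [Finite β]
    {G' : SimpleGraph (α ⊕ β)} {G : SimpleGraph α} {H : SimpleGraph β} {x y : α} {u v : β}
    {r : ℕ} (hG : G'.IsJoinedBy (G.deleteEdges {s(x, y)}) H x u y v) (hxy : G.Adj x y)
    (huv : u ≠ v) (hreg : ∀ a, (G.neighborSet a).ncard = r)
    (hu : (H.neighborSet u).ncard = r - 1) (hv : (H.neighborSet v).ncard = r - 1)
    (hw : ∀ w, w ≠ u → w ≠ v → (H.neighborSet w).ncard = r) (z : α ⊕ β) :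
    (G'.neighborSet z).ncard = r := by
  have hr : 0 < r := hreg x ▸ (Set.ncard_pos (Set.toFinite _)).2 ⟨y, hxy⟩
  rcases z with a | b
  · rw [hG.ncard_neighborSet_inl, ← hreg a, ← ncard_neighborSet_deleteEdges_add hxy a]
    have := hxy.ne
    by_cases hx : a = x <;> by_cases hy : a = y <;> simp_all
  · rw [hG.ncard_neighborSet_inr]
    by_cases hbu : b = u
    · subst hbu
      simp only [and_true, huv, and_false, or_false, Set.ofPred_eq_eq_singleton,
        Set.ncard_singleton, hu]
      omega
    by_cases hbv : b = v
    · subst hbv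
      simp only [hbu, and_false, and_true, false_or, Set.ofPred_eq_eq_singleton,
        Set.ncard_singleton, hv]
      omega
    · simp [hbu, hbv, hw b hbu hbv]

end SimpleGraph

theorem stmt10_general {α β : Type*} [Fintype α] [Fintype β] [DecidableEq α] [DecidableEq β]
    (r : ℕ)
    (G : SimpleGraph α) (hreg : ∀ a : α, (G.neighborSet a).ncard = r)
    (x y : α) (hxy : G.Adj x y) (c1 : ℕ)
    (hc1 : {s : Set (Sym2 α) | ∃ (a : α) (c : G.Walk a a),
        c.IsHamiltonianCycle ∧ s(x, y) ∈ c.edges ∧ s = {e | e ∈ c.edges}}.ncard = c1)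
    (H : SimpleGraph β) (u v : β) (huv : u ≠ v)
    (hu : (H.neighborSet u).ncard = r - 1) (hv : (H.neighborSet v).ncard = r - 1)
    (hw : ∀ w : β, w ≠ u → w ≠ v → (H.neighborSet w).ncard = r)
    (c2 : ℕ) (hc2 : Nat.card {p : H.Walk u v // p.IsHamiltonian} = c2)
    (G' : SimpleGraph (α ⊕ β))
    (hll : ∀ a b : α, G'.Adj (.inl a) (.inl b) ↔ (G.Adj a b ∧ s(a, b) ≠ s(x, y)))
    (hrr : ∀ a b : β, G'.Adj (.inr a) (.inr b) ↔ H.Adj a b)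
    (hlr : ∀ (a : α) (b : β), G'.Adj (.inl a) (.inr b) ↔ ((a = x ∧ b = u) ∨ (a = y ∧ b = v))) :
    (∀ p : α ⊕ β, (G'.neighborSet p).ncard = r)
    ∧ {s : Set (Sym2 (α ⊕ β)) | ∃ (a : α ⊕ β) (c : G'.Walk a a),
        c.IsHamiltonianCycle ∧ s = {e | e ∈ c.edges}}.ncard = c1 * c2 := by
  have hG : G'.IsJoinedBy (G.deleteEdges {s(x, y)}) H x u y v :=
    ⟨fun a b => by simp [hll], hrr, hlr⟩
  refine ⟨hG.ncard_neighborSet_eq_of_deleteEdges hxy huv hreg hu hv hw,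
    (hG.ncard_setOf_isHamiltonianCycle huv).trans ?_⟩
  rw [Nat.card_prod, hc2, ← ncard_setOf_isHamiltonianCycle_mem_edges hxy, mul_comm]
  exact congrArg (· * c2) hc1

/-- Splicing a gadget `H` into an edge of an `r`-regular graph `G`: the result
is `r`-regular and its number of pairwise distinct Hamiltonian cycles is
`c1 * c2`. -/
theorem stmt10 {α β : Type*} [Fintype α] [Fintype β] [DecidableEq α] [DecidableEq β]
    (r : ℕ) (hr : 2 ≤ r)
    (G : SimpleGraph α) (hreg : ∀ a : α, (G.neighborSet a).ncard = r)
    (x y : α) (hxy : G.Adj x y) (c1 : ℕ)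
    (hc1 : {s : Set (Sym2 α) | ∃ (a : α) (c : G.Walk a a),
        c.IsHamiltonianCycle ∧ s(x, y) ∈ c.edges ∧ s = {e | e ∈ c.edges}}.ncard = c1)
    (H : SimpleGraph β) (u v : β) (huv : u ≠ v)
    (hu : (H.neighborSet u).ncard = r - 1) (hv : (H.neighborSet v).ncard = r - 1)
    (hw : ∀ w : β, w ≠ u → w ≠ v → (H.neighborSet w).ncard = r)
    (c2 : ℕ) (hc2 : Nat.card {p : H.Walk u v // p.IsHamiltonian} = c2)
    (G' : SimpleGraph (α ⊕ β))
    (hll : ∀ a b : α, G'.Adj (.inl a) (.inl b) ↔ (G.Adj a b ∧ s(a, b) ≠ s(x, y)))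
    (hrr : ∀ a b : β, G'.Adj (.inr a) (.inr b) ↔ H.Adj a b)
    (hlr : ∀ (a : α) (b : β), G'.Adj (.inl a) (.inr b) ↔ ((a = x ∧ b = u) ∨ (a = y ∧ b = v))) :
    (∀ p : α ⊕ β, (G'.neighborSet p).ncard = r)
    ∧ {s : Set (Sym2 (α ⊕ β)) | ∃ (a : α ⊕ β) (c : G'.Walk a a),
        c.IsHamiltonianCycle ∧ s = {e | e ∈ c.edges}}.ncard = c1 * c2 :=
  stmt10_general r G hreg x y hxy c1 hc1 H u v huv hu hv hw c2 hc2 G' hll hrr hlr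
end

section
/- For every ε > 0 and every integer r ≥ 5, if a_r = ((2r-8)·((r-4)!)²·((r-1)!))^(1/(3r+1)) and b_r = ((r-2)!)^(1/(r+1)), then a_r < b_r, and consequently a_r^n = o(b_r^n) as n → ∞; that is, the sequence (a_r/b_r)^n tends to 0. -/
/-! With `m = r - 4` and `P = (m + 1)(m + 2)`, the inequality `a < b` amounts to
`(2m (m!)² (m+3)!)^(m+5) < ((m+2)!)^(3m+13)`. Since `(m+2)! = P m!`, `(m+3)! = (m+3) P m!` and
`m(m+3) < P`, this reduces to `2^(m+5) (m!)² < P^(m+3)`, which follows from the AM–GM bound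
`4^m (m!)² ≤ (m+1)^(2m)` (pair `k` with `m+1-k`), proved by induction using Bernoulli's
inequality `2 nⁿ ≤ (n+1)ⁿ`. Then `a / b ∈ [0, 1)`, so its powers tend to `0`. -/

open Nat

theorem two_mul_pow_self_le_succ_pow {n : ℕ} (hn : n ≠ 0) : 2 * n ^ n ≤ (n + 1) ^ n := by
  have := pow_add_mul_le_add_pow (zero_le n) (by omega : 0 ≤ 2 * n + 1) n
  rwa [Nat.cast_id, mul_one, mul_pow_sub_one hn, ← two_mul] at this

theorem four_pow_mul_factorial_sq_le (m : ℕ) : 4 ^ m * m ! ^ 2 ≤ (m + 1) ^ (2 * m) := by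
  induction m with
  | zero => simp
  | succ n ih =>
    calc 4 ^ (n + 1) * (n + 1)! ^ 2 = 4 * (n + 1) ^ 2 * (4 ^ n * n ! ^ 2) := by
          rw [factorial_succ]; ring
      _ ≤ 4 * (n + 1) ^ 2 * (n + 1) ^ (2 * n) := by gcongr
      _ = (2 * (n + 1) ^ (n + 1)) ^ 2 := by ring
      _ ≤ ((n + 2) ^ (n + 1)) ^ 2 := by gcongr; exact two_mul_pow_self_le_succ_pow n.succ_ne_zero
      _ = (n + 1 + 1) ^ (2 * (n + 1)) := by ring

theorem two_pow_mul_factorial_sq_lt {m : ℕ} (hm : m ≠ 0) :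
    2 ^ (m + 5) * m ! ^ 2 < ((m + 1) * (m + 2)) ^ (m + 3) := by
  have h2 : 2 ^ (m + 5) ≤ 4 ^ m * (m + 1) ^ 6 :=
    calc 2 ^ (m + 5) ≤ 4 ^ m * 2 ^ 6 := by rw [pow_add]; gcongr <;> norm_num
      _ ≤ 4 ^ m * (m + 1) ^ 6 := by gcongr; omega
  refine lt_of_mul_lt_mul_left (a := 4 ^ m) ?_ (zero_le _)
  calc 4 ^ m * (2 ^ (m + 5) * m ! ^ 2) = 2 ^ (m + 5) * (4 ^ m * m ! ^ 2) := by ring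
    _ ≤ 4 ^ m * (m + 1) ^ 6 * (m + 1) ^ (2 * m) := by
        gcongr
        exact four_pow_mul_factorial_sq_le m
    _ = 4 ^ m * ((m + 1) * (m + 1)) ^ (m + 3) := by rw [mul_pow]; ring
    _ < 4 ^ m * ((m + 1) * (m + 2)) ^ (m + 3) := by gcongr; omega

theorem two_mul_factorial_sq_mul_factorial_pow_lt {m : ℕ} (hm : m ≠ 0) :
    (2 * m * m ! ^ 2 * (m + 3)!) ^ (m + 5) < (m + 2)! ^ (3 * m + 13) := by
  set P := (m + 1) * (m + 2)
  have hP : (m + 2)! = P * m ! := by simp only [P, factorial_succ]; ring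
  have hP' : (m + 3)! = (m + 3) * P * m ! := by rw [factorial_succ, hP]; ring
  have hP0 : 0 < P := by positivity
  have hmP : m * (m + 3) ≤ P := by simp only [P]; nlinarith
  have hfac : 2 ^ (m + 5) * m ! ^ 2 < P ^ (m + 3) := two_pow_mul_factorial_sq_lt hm
  clear_value P
  calc (2 * m * m ! ^ 2 * (m + 3)!) ^ (m + 5)
        = (2 * (m * (m + 3))) ^ (m + 5) * P ^ (m + 5) * m ! ^ (3 * m + 15) := by
          rw [hP']; simp only [mul_pow]; ring
    _ ≤ (2 * P) ^ (m + 5) * P ^ (m + 5) * m ! ^ (3 * m + 15) := by gcongr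
    _ = 2 ^ (m + 5) * m ! ^ 2 * (P ^ (2 * m + 10) * m ! ^ (3 * m + 13)) := by ring
    _ < P ^ (m + 3) * (P ^ (2 * m + 10) * m ! ^ (3 * m + 13)) := by gcongr
    _ = (m + 2)! ^ (3 * m + 13) := by rw [hP, mul_pow]; ring

theorem Real.rpow_inv_lt_rpow_inv_of_pow_lt {x y : ℝ} {p q : ℕ} (hx : 0 ≤ x) (hy : 0 ≤ y)
    (hp : p ≠ 0) (hq : q ≠ 0) (h : x ^ p < y ^ q) : x ^ (q⁻¹ : ℝ) < y ^ (p⁻¹ : ℝ) := by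
  refine lt_of_pow_lt_pow_left₀ (p * q) (by positivity) ?_
  rwa [pow_mul', Real.rpow_inv_natCast_pow hx hq, pow_mul, Real.rpow_inv_natCast_pow hy hp]

/-- For `r ≥ 5`, `a_r < b_r` and hence `(a_r / b_r)^n → 0`, i.e.
`a_r^n = o(b_r^n)`. -/
theorem stmt18 (r : ℕ) (hr : 5 ≤ r)
    (a b : ℝ)
    (ha : a = ((2 * (r : ℝ) - 8) * ((Nat.factorial (r - 4) : ℝ))^2
        * (Nat.factorial (r - 1) : ℝ)) ^ ((1 : ℝ) / (3 * (r : ℝ) + 1)))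
    (hb : b = ((Nat.factorial (r - 2) : ℝ)) ^ ((1 : ℝ) / ((r : ℝ) + 1))) :
    a < b ∧ Filter.Tendsto (fun n : ℕ => (a / b) ^ n) Filter.atTop (nhds 0) := by
  obtain ⟨m, rfl⟩ : ∃ m, r = m + 4 := ⟨r - 4, by omega⟩
  have ha' : a = ((2 * m * m ! ^ 2 * (m + 3)! : ℕ) : ℝ) ^ ((3 * m + 13 : ℕ) : ℝ)⁻¹ := by
    rw [ha, one_div]
    simp only [Nat.add_sub_cancel, show m + 4 - 1 = m + 3 by omega]
    push_cast
    ring_nf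
  have hb' : b = ((m + 2)! : ℝ) ^ ((m + 5 : ℕ) : ℝ)⁻¹ := by
    rw [hb, one_div, show m + 4 - 2 = m + 2 by omega]
    push_cast
    ring_nf
  have hab : a < b := by
    rw [ha', hb']
    refine Real.rpow_inv_lt_rpow_inv_of_pow_lt (by positivity) (by positivity)
      (by omega) (by omega) ?_
    exact_mod_cast two_mul_factorial_sq_mul_factorial_pow_lt (by omega : m ≠ 0)
  have ha0 : 0 ≤ a := by rw [ha']; positivity
  have hb0 : 0 < b := ha0.trans_lt hab
  exact ⟨hab, tendsto_pow_atTop_nhds_zero_of_lt_one (by positivity) ((div_lt_one hb0).mpr hab)⟩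
end
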